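/- Let f(x) = a|x|³ + bx² + cx + d on ℝ with a, b ≥ 0 and r > 0. Then f is convex, and the proximal mapping is P_r f(x) = (r + 2b - √((r+2b)² - 12a(rx - c)))/(6a) if x < c/r, and P_r f(x) = (-(r+2b) + √((r+2b)² + 12a(rx - c)))/(6a) if x ≥ c/r. -/

import Mathlib

/-! `f` has the subgradient `3a p|p| + 2b p + c` at every point `p`, which gives convexity at once.
The prox point at `x` is the unique `p` with `r (x - p)` a subgradient at `p`, i.e. the root of
`3a p|p| + (r + 2b) p = r x - c`. This root has the sign of `r x - c`, and on that half-line
the equation is quadratic; the two formulas are its roots there. -/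

/-- `p` is a proximal point of `f` at `x` with parameter `r`. -/
def IsProx (f : ℝ → ℝ) (r x p : ℝ) : Prop :=
  ∀ y : ℝ, f p + r / 2 * (p - x) ^ 2 ≤ f y + r / 2 * (y - x) ^ 2

theorem convexOn_univ_of_forall_subgradient {f g : ℝ → ℝ}
    (hg : ∀ p y, f p + g p * (y - p) ≤ f y) : ConvexOn ℝ Set.univ f := by
  refine ⟨convex_univ, fun x _ y _ t s ht hs hts => ?_⟩
  set z := t * x + s * y
  have hx := mul_le_mul_of_nonneg_left (hg z x) ht
  have hy := mul_le_mul_of_nonneg_left (hg z y) hs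
  have hz : t * (x - z) + s * (y - z) = 0 := by
    simp only [z]; linear_combination (-(t * x) - s * y) * hts
  show f z ≤ t * f x + s * f y
  linear_combination hx + hy - f z * hts - g z * hz

-- The prox objective is `r`-strongly convex, hence has quadratic growth around `p₀`.
theorem isProx_iff_eq_of_subgradient {f : ℝ → ℝ} {r x p₀ : ℝ} (hr : 0 < r)
    (hg : ∀ y, f p₀ + r * (x - p₀) * (y - p₀) ≤ f y) (p : ℝ) :
    IsProx f r x p ↔ p = p₀ := by
  have hgrowth : ∀ y, f p₀ + r / 2 * (p₀ - x) ^ 2 + r / 2 * (y - p₀) ^ 2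
      ≤ f y + r / 2 * (y - x) ^ 2 := fun y => by linarith [hg y]
  constructor
  · intro hp
    have hle : r / 2 * (p - p₀) ^ 2 ≤ 0 := by linarith [hp p₀, hgrowth p]
    have hsq : (p - p₀) ^ 2 = 0 :=
      le_antisymm (nonpos_of_mul_nonpos_right hle (by positivity)) (sq_nonneg _)
    exact sub_eq_zero.mp (pow_eq_zero_iff two_ne_zero |>.mp hsq)
  · rintro rfl y
    linarith [hgrowth y, mul_nonneg hr.le (sq_nonneg (y - p))]

theorem abs_pow_three_add_mul_sub_le (p y : ℝ) :
    |p| ^ 3 + 3 * p * |p| * (y - p) ≤ |y| ^ 3 := by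
  have hpy : p * |p| * y ≤ p ^ 2 * |y| := by
    calc p * |p| * y ≤ |p * |p| * y| := le_abs_self _
      _ = p ^ 2 * |y| := by rw [abs_mul, abs_mul, abs_abs, ← sq_abs p]; ring
  have hsq : 0 ≤ (|y| - |p|) ^ 2 * (|y| + 2 * |p|) := by positivity
  nlinarith [sq_abs p, abs_nonneg p, abs_nonneg y]

theorem cubic_add_subgradient_le {a b : ℝ} (ha : 0 ≤ a) (hb : 0 ≤ b) (c d p y : ℝ) :
    a * |p| ^ 3 + b * p ^ 2 + c * p + d + (3 * a * p * |p| + 2 * b * p + c) * (y - p)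
      ≤ a * |y| ^ 3 + b * y ^ 2 + c * y + d := by
  nlinarith [mul_le_mul_of_nonneg_left (abs_pow_three_add_mul_sub_le p y) ha,
    mul_nonneg hb (sq_nonneg (y - p))]

theorem mul_mul_abs_add_mul_eq_of_nonneg {a R v : ℝ} (ha : 0 < a) (hv : 0 ≤ v) :
    let p := (-R + √(R ^ 2 + 12 * a * v)) / (6 * a)
    3 * a * p * |p| + R * p = v := by
  set s := √(R ^ 2 + 12 * a * v)
  intro p
  have hs : s ^ 2 = R ^ 2 + 12 * a * v := Real.sq_sqrt (by positivity)
  have hRs : R ≤ s := Real.le_sqrt_of_sq_le (by nlinarith)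
  have hp : 0 ≤ p := div_nonneg (by linarith) (by positivity)
  rw [abs_of_nonneg hp]
  simp only [p]
  field_simp
  linear_combination 3 * hs

theorem mul_mul_abs_add_mul_eq_of_neg {a R v : ℝ} (ha : 0 < a) (hv : v < 0) :
    let p := (R - √(R ^ 2 - 12 * a * v)) / (6 * a)
    3 * a * p * |p| + R * p = v := by
  intro p
  -- `p ↦ 3a p|p| + R p` is odd
  have hneg := mul_mul_abs_add_mul_eq_of_nonneg (R := R) ha (neg_nonneg.mpr hv.le)
  have hp : p = -((-R + √(R ^ 2 + 12 * a * -v)) / (6 * a)) := by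
    simp only [p, mul_neg, sub_eq_add_neg]; ring
  rw [hp, abs_neg]
  linear_combination -hneg

/-- For `f(x) = a|x|³ + bx² + cx + d` with `a > 0`, `b ≥ 0`: `f` is convex and its
proximal mapping is given by explicit formulas on either side of `c/r`. -/
theorem prox_general_cubic (a b c d : ℝ) (ha : 0 < a) (hb : 0 ≤ b)
    (f : ℝ → ℝ) (hf : ∀ x, f x = a * |x| ^ 3 + b * x ^ 2 + c * x + d)
    (r : ℝ) (hr : 0 < r) :
    ConvexOn ℝ Set.univ f ∧
    (∀ x, ∀ p, IsProx f r x p ↔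
      p = if x < c / r then
        (r + 2 * b - Real.sqrt ((r + 2 * b) ^ 2 - 12 * a * (r * x - c))) / (6 * a)
      else
        (-(r + 2 * b) + Real.sqrt ((r + 2 * b) ^ 2 + 12 * a * (r * x - c))) / (6 * a)) := by
  have hsub : ∀ p y, f p + (3 * a * p * |p| + 2 * b * p + c) * (y - p) ≤ f y := fun p y => by
    rw [hf, hf]; exact cubic_add_subgradient_le ha.le hb c d p y
  have hsub_of_root : ∀ x p, 3 * a * p * |p| + (r + 2 * b) * p = r * x - c →
      ∀ y, f p + r * (x - p) * (y - p) ≤ f y := fun x p hp y => by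
    linear_combination hsub p y - (y - p) * hp
  refine ⟨convexOn_univ_of_forall_subgradient hsub,
    fun x => isProx_iff_eq_of_subgradient hr (hsub_of_root x _ ?_)⟩
  split_ifs with hx
  · exact mul_mul_abs_add_mul_eq_of_neg ha (by linarith [(lt_div_iff₀ hr).mp hx])
  · exact mul_mul_abs_add_mul_eq_of_nonneg ha (by linarith [(div_le_iff₀ hr).mp (not_lt.mp hx)])
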